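/- Let Φ be irreducible and α ∈ Π. The number of roots in Φ_{α,1} = {γ ∈ Φ : c_α(γ)=1} having the same length as α equals |W⟨Π\{α}⟩| / |W⟨Π\Ñ[α]⟩|, where Ñ[α] = {α} ∪ {ε ∈ Π\{α} : (ε,α) ≠ 0}. -/

import Mathlib

open scoped RealInnerProductSpace
attribute [local instance] Classical.propDecidable

variable {E : Type*} [NormedAddCommGroup E] [InnerProductSpace ℝ E] [FiniteDimensional ℝ E]

/-- A finite reduced crystallographic root system spanning `E`. -/
structure IsRootSystem (Φ : Finset E) : Prop where
  nonzero : ∀ γ ∈ Φ, γ ≠ (0 : E)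
  span_top : Submodule.span ℝ (Φ : Set E) = ⊤
  reduced : ∀ γ ∈ Φ, ∀ t : ℝ, t • γ ∈ Φ → t = 1 ∨ t = -1
  reflect : ∀ γ ∈ Φ, ∀ δ ∈ Φ, δ - (2 * ⟪δ, γ⟫ / ⟪γ, γ⟫) • γ ∈ Φ
  cry : ∀ γ ∈ Φ, ∀ δ ∈ Φ, ∃ n : ℤ, 2 * ⟪δ, γ⟫ / ⟪γ, γ⟫ = (n : ℝ)

/-- `Δ` is a simple system (base) for `Φ`, and `c γ a` is the coordinate of `γ`
on the simple root `a`. -/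
structure IsBase (Φ Δ : Finset E) (c : E → E → ℝ) : Prop where
  subset : Δ ⊆ Φ
  indep : LinearIndependent ℝ (fun x : (Δ : Set E) => (x : E))
  repr : ∀ γ ∈ Φ, γ = ∑ a ∈ Δ, c γ a • a
  int : ∀ γ ∈ Φ, ∀ a ∈ Δ, ∃ n : ℤ, c γ a = (n : ℝ)
  sign : ∀ γ ∈ Φ, (∀ a ∈ Δ, 0 ≤ c γ a) ∨ (∀ a ∈ Δ, c γ a ≤ 0)

/-- Irreducibility: no splitting into two nonempty mutually orthogonal parts. -/
def IsIrredSys (Φ : Finset E) : Prop :=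
  ∀ s : Set E, s ⊆ (Φ : Set E) → (∀ x ∈ s, ∀ y ∈ (Φ : Set E) \ s, ⟪x, y⟫ = 0) →
    s = ∅ ∨ s = (Φ : Set E)

/-- The reflection through the hyperplane orthogonal to `γ`. -/
noncomputable def sref (γ : E) : E ≃ₗᵢ[ℝ] E := Submodule.reflection (Submodule.span ℝ {γ})ᗮ

/-- The Weyl group, generated by the reflections in the roots. -/
noncomputable def weyl (Φ : Finset E) : Subgroup (E ≃ₗᵢ[ℝ] E) :=
  Subgroup.closure {g | ∃ γ ∈ Φ, g = sref γ}

/-!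
The group `G` generated by the simple reflections other than `s_α` leaves the `α`-coordinate of
every root unchanged and preserves lengths, so it maps `α` into the set of roots in question.
Conversely, in the `G`-orbit of such a root `γ` pick a root `δ` of minimal height; if `δ ≠ α`,
then `‖δ - α‖² = 2 (‖δ‖² - ⟪δ, α⟫) > 0` forces `⟪δ, β⟫ > 0` for some simple `β ≠ α`, and
`s_β δ` has smaller height. Hence the set is the orbit `G • α`, and the orbit-stabilizer theorem
reduces the claim to identifying the stabilizer of `α` in `G`.

For this, let `w = s_{β₁} ⋯ s_{βₙ}` fix `α`, where the `βᵢ ≠ α` are simple. If `w βₙ` is positive,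
the exchange condition shortens the word. If `w βₙ` is negative, it is a nonpositive combination
of simple roots orthogonal-or-obtuse to `α`, so `⟪α, βₙ⟫ = ⟪α, w βₙ⟫ ≥ 0`; as `⟪α, βₙ⟫ ≤ 0`,
`s_{βₙ}` lies in `W⟨Π \ Ñ[α]⟩` and the exchange condition shortens `w s_{βₙ}`, which still
fixes `α`.
-/

section

variable {V : Type*} [NormedAddCommGroup V] [InnerProductSpace ℝ V]

theorem sref_apply (γ x : V) : sref γ x = x - (2 * ⟪x, γ⟫ / ⟪γ, γ⟫) • γ := by
  have : (Submodule.span ℝ {γ}).starProjection x = (⟪γ, x⟫ / ‖γ‖ ^ 2) • γ :=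
    Submodule.starProjection_singleton ℝ x
  rw [sref, Submodule.reflection_apply, Submodule.starProjection_orthogonal,
    sub_apply, ContinuousLinearMap.id_apply]
  push_cast [this]
  rw [real_inner_self_eq_norm_sq, real_inner_comm, two_smul]
  module

theorem sref_mul_self (γ : V) : sref γ * sref γ = 1 :=
  Submodule.reflection_mul_reflection _

theorem sref_inv (γ : V) : (sref γ)⁻¹ = sref γ :=
  Submodule.reflection_inv

theorem sref_self (γ : V) : sref γ γ = -γ :=
  Submodule.reflection_orthogonalComplement_singleton_eq_neg γ

theorem sref_apply_of_inner_eq_zero {β x : V} (h : ⟪β, x⟫ = 0) : sref β x = x :=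
  Submodule.reflection_mem_subspace_eq_self
    (Submodule.mem_orthogonal_singleton_iff_inner_right.mpr h)

theorem sref_conj (g : V ≃ₗᵢ[ℝ] V) (γ : V) : sref (g γ) = g * sref γ * g⁻¹ := by
  ext x
  change sref (g γ) x = g (sref γ (g.symm x))
  rw [sref_apply, sref_apply, map_sub, LinearIsometryEquiv.map_smul, g.apply_symm_apply,
    ← g.inner_map_map (g.symm x) γ, g.apply_symm_apply, ← g.inner_map_map γ γ]

instance LinearIsometryEquiv.applyMulAction : MulAction (V ≃ₗᵢ[ℝ] V) V where
  smul g x := g x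
  one_smul _ := rfl
  mul_smul _ _ _ := rfl

theorem LinearIsometryEquiv.smul_def (g : V ≃ₗᵢ[ℝ] V) (x : V) : g • x = g x := rfl

noncomputable def word (l : List V) : V ≃ₗᵢ[ℝ] V := (l.map sref).prod

@[simp] theorem word_nil : word ([] : List V) = 1 := rfl

@[simp] theorem word_cons (b : V) (l : List V) : word (b :: l) = sref b * word l := List.prod_cons

@[simp] theorem word_singleton (b : V) : word [b] = sref b := mul_one _

@[simp] theorem word_append (l l' : List V) : word (l ++ l') = word l * word l' := by
  simp [word]

theorem word_reverse (l : List V) : word l.reverse = (word l)⁻¹ := by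
  induction l with
  | nil => simp
  | cons b l ih => simp [ih, sref_inv]

/-- `W⟨{b ∈ Δ | P b}⟩` in the notation of the statement. -/
noncomputable def parabolic (Δ : Finset V) (P : V → Prop) : Subgroup (V ≃ₗᵢ[ℝ] V) :=
  Subgroup.closure {g | ∃ b ∈ Δ, P b ∧ g = sref b}

variable {Φ Δ : Finset V} {c : V → V → ℝ}

theorem sref_mem_parabolic {P : V → Prop} {b : V} (hb : b ∈ Δ) (hP : P b) :
    sref b ∈ parabolic Δ P :=
  Subgroup.subset_closure ⟨b, hb, hP, rfl⟩

theorem parabolic_mono {P Q : V → Prop} (h : ∀ b ∈ Δ, P b → Q b) :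
    parabolic Δ P ≤ parabolic Δ Q :=
  Subgroup.closure_mono fun _ ⟨b, hb, hP, hg⟩ => ⟨b, hb, h b hb hP, hg⟩

theorem parabolic_congr {P Q : V → Prop} (h : ∀ b ∈ Δ, P b ↔ Q b) :
    parabolic Δ P = parabolic Δ Q :=
  le_antisymm (parabolic_mono fun b hb => (h b hb).mp) (parabolic_mono fun b hb => (h b hb).mpr)

theorem exists_word_of_mem_parabolic {P : V → Prop} {w : V ≃ₗᵢ[ℝ] V} (hw : w ∈ parabolic Δ P) :
    ∃ l : List V, (∀ b ∈ l, b ∈ Δ ∧ P b) ∧ word l = w := by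
  induction hw using Subgroup.closure_induction with
  | mem g hg =>
    obtain ⟨b, hb, hP, rfl⟩ := hg
    exact ⟨[b], by simp [hb, hP], by simp⟩
  | one => exact ⟨[], by simp, rfl⟩
  | mul x y _ _ ihx ihy =>
    obtain ⟨lx, hlx, rfl⟩ := ihx
    obtain ⟨ly, hly, rfl⟩ := ihy
    exact ⟨lx ++ ly, fun b hb => (List.mem_append.mp hb).elim (hlx b) (hly b), word_append lx ly⟩
  | inv x _ ihx =>
    obtain ⟨lx, hlx, rfl⟩ := ihx
    exact ⟨lx.reverse, fun b hb => hlx b (List.mem_reverse.mp hb), word_reverse lx⟩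

namespace IsRootSystem

theorem inner_self_pos (hΦ : IsRootSystem Φ) {γ : V} (hγ : γ ∈ Φ) : 0 < ⟪γ, γ⟫ :=
  real_inner_self_pos.mpr (hΦ.nonzero γ hγ)

theorem sref_apply_mem (hΦ : IsRootSystem Φ) {γ δ : V} (hγ : γ ∈ Φ) (hδ : δ ∈ Φ) :
    sref γ δ ∈ Φ := by
  rw [sref_apply]
  exact hΦ.reflect γ hγ δ hδ

theorem neg_mem (hΦ : IsRootSystem Φ) {γ : V} (hγ : γ ∈ Φ) : -γ ∈ Φ :=
  sref_self γ ▸ hΦ.sref_apply_mem hγ hγ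

theorem word_apply_mem (hΦ : IsRootSystem Φ) {l : List V} (hl : ∀ b ∈ l, b ∈ Φ) {γ : V}
    (hγ : γ ∈ Φ) : word l γ ∈ Φ := by
  induction l with
  | nil => exact hγ
  | cons b l ih =>
    exact hΦ.sref_apply_mem (hl b List.mem_cons_self)
      (ih fun x hx => hl x (List.mem_cons_of_mem b hx))

theorem apply_mem_of_mem_parabolic (hΦ : IsRootSystem Φ) (hΔ : Δ ⊆ Φ) {P : V → Prop}
    {w : V ≃ₗᵢ[ℝ] V} (hw : w ∈ parabolic Δ P) {γ : V} (hγ : γ ∈ Φ) : w γ ∈ Φ := by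
  obtain ⟨l, hl, rfl⟩ := exists_word_of_mem_parabolic hw
  exact hΦ.word_apply_mem (fun b hb => hΔ (hl b hb).1) hγ

theorem finite_parabolic (hΦ : IsRootSystem Φ) (hΔ : Δ ⊆ Φ) (P : V → Prop) :
    Finite (parabolic Δ P) := by
  let restrict (g : parabolic Δ P) (γ : Φ) : Φ :=
    ⟨(g : V ≃ₗᵢ[ℝ] V) γ, hΦ.apply_mem_of_mem_parabolic hΔ g.2 γ.2⟩
  refine Finite.of_injective restrict fun g g' h => ?_
  have hlin : (g : V ≃ₗᵢ[ℝ] V).toLinearEquiv.toLinearMap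
      = (g' : V ≃ₗᵢ[ℝ] V).toLinearEquiv.toLinearMap :=
    LinearMap.ext_on hΦ.span_top fun γ hγ => congrArg Subtype.val (congrFun h ⟨γ, hγ⟩)
  exact Subtype.ext (LinearIsometryEquiv.ext (LinearMap.congr_fun hlin))

end IsRootSystem

namespace IsBase

theorem coord_eq_of_eq_sum (hB : IsBase Φ Δ c) {γ : V} (hγ : γ ∈ Φ) {f : V → ℝ}
    (h : γ = ∑ a ∈ Δ, f a • a) {a : V} (ha : a ∈ Δ) : c γ a = f a :=
  linearIndepOn_finset_iffₛ.mp (show LinearIndepOn ℝ id (Δ : Set V) from hB.indep) (c γ) f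
    ((hB.repr γ hγ).symm.trans h) a ha

theorem coord_simple (hB : IsBase Φ Δ c) {a b : V} (ha : a ∈ Δ) (hb : b ∈ Δ) :
    c a b = if b = a then 1 else 0 :=
  hB.coord_eq_of_eq_sum (f := fun x => if x = a then 1 else 0) (hB.subset ha)
    (by simp [ite_smul, ha]) hb

theorem coord_sref (hΦ : IsRootSystem Φ) (hB : IsBase Φ Δ c) {β γ a : V} (hβ : β ∈ Δ)
    (hγ : γ ∈ Φ) (ha : a ∈ Δ) :
    c (sref β γ) a = c γ a - if a = β then 2 * ⟪γ, β⟫ / ⟪β, β⟫ else 0 := by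
  refine hB.coord_eq_of_eq_sum (f := fun x => c γ x - if x = β then 2 * ⟪γ, β⟫ / ⟪β, β⟫ else 0)
    (hΦ.sref_apply_mem (hB.subset hβ) hγ) ?_ ha
  simp only [sub_smul, Finset.sum_sub_distrib, ite_smul, zero_smul, Finset.sum_ite_eq', if_pos hβ,
    ← hB.repr γ hγ, sref_apply]

theorem coord_neg (hΦ : IsRootSystem Φ) (hB : IsBase Φ Δ c) {γ a : V} (hγ : γ ∈ Φ)
    (ha : a ∈ Δ) : c (-γ) a = -c γ a := by
  refine hB.coord_eq_of_eq_sum (f := fun x => -c γ x) (hΦ.neg_mem hγ) ?_ ha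
  simp only [neg_smul, Finset.sum_neg_distrib, ← hB.repr γ hγ]

theorem sum_coord_sref (hΦ : IsRootSystem Φ) (hB : IsBase Φ Δ c) {β γ : V} (hβ : β ∈ Δ)
    (hγ : γ ∈ Φ) : ∑ a ∈ Δ, c (sref β γ) a = ∑ a ∈ Δ, c γ a - 2 * ⟪γ, β⟫ / ⟪β, β⟫ := by
  rw [Finset.sum_congr rfl fun a ha => hB.coord_sref hΦ hβ hγ ha, Finset.sum_sub_distrib,
    Finset.sum_ite_eq', if_pos hβ]

theorem inner_eq_sum_coord (hB : IsBase Φ Δ c) {γ : V} (hγ : γ ∈ Φ) (x : V) :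
    ⟪x, γ⟫ = ∑ a ∈ Δ, c γ a * ⟪x, a⟫ := by
  conv_lhs => rw [hB.repr γ hγ]
  simp only [inner_sum, real_inner_smul_right]

theorem exists_coord_ne_zero (hΦ : IsRootSystem Φ) (hB : IsBase Φ Δ c) {γ : V} (hγ : γ ∈ Φ) :
    ∃ a ∈ Δ, c γ a ≠ 0 := by
  by_contra! h
  refine hΦ.nonzero γ hγ ?_
  rw [hB.repr γ hγ]
  exact Finset.sum_eq_zero fun a ha => by simp [h a ha]

theorem coord_nonneg_of_pos (hB : IsBase Φ Δ c) {γ a : V} (hγ : γ ∈ Φ) (ha : a ∈ Δ)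
    (h : 0 < c γ a) : ∀ b ∈ Δ, 0 ≤ c γ b :=
  (hB.sign γ hγ).resolve_right fun hn => (hn a ha).not_gt h

theorem inner_nonpos (hΦ : IsRootSystem Φ) (hB : IsBase Φ Δ c) {a b : V} (ha : a ∈ Δ)
    (hb : b ∈ Δ) (hne : b ≠ a) : ⟪a, b⟫ ≤ 0 := by
  by_contra! h
  have hk : 0 < 2 * ⟪b, a⟫ / ⟪a, a⟫ :=
    div_pos (by rw [real_inner_comm]; linarith) (hΦ.inner_self_pos (hB.subset ha))
  have hb' : c (sref a b) b = 1 := by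
    rw [hB.coord_sref hΦ ha (hB.subset hb) hb, if_neg hne, hB.coord_simple hb hb, if_pos rfl,
      sub_zero]
  have ha' : c (sref a b) a = -(2 * ⟪b, a⟫ / ⟪a, a⟫) := by
    rw [hB.coord_sref hΦ ha (hB.subset hb) ha, if_pos rfl, hB.coord_simple hb ha, if_neg hne.symm,
      zero_sub]
  rcases hB.sign _ (hΦ.sref_apply_mem (hB.subset ha) (hB.subset hb)) with hp | hn
  · linarith [hp a ha]
  · linarith [hn b hb]

theorem sref_apply_nonneg (hΦ : IsRootSystem Φ) (hB : IsBase Φ Δ c) {β γ : V} (hβ : β ∈ Δ)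
    (hγ : γ ∈ Φ) (hpos : ∀ a ∈ Δ, 0 ≤ c γ a) (hne : γ ≠ β) : ∀ a ∈ Δ, 0 ≤ c (sref β γ) a := by
  by_cases hex : ∃ a ∈ Δ, a ≠ β ∧ 0 < c γ a
  · obtain ⟨a, ha, haβ, hγa⟩ := hex
    refine hB.coord_nonneg_of_pos (hΦ.sref_apply_mem (hB.subset hβ) hγ) ha ?_
    rwa [hB.coord_sref hΦ hβ hγ ha, if_neg haβ, sub_zero]
  · push Not at hex
    have hγβ : γ = c γ β • β := by
      conv_lhs => rw [hB.repr γ hγ]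
      refine Finset.sum_eq_single β (fun b hb hbβ => ?_) (absurd hβ)
      rw [le_antisymm (hex b hb hbβ) (hpos b hb), zero_smul]
    rcases hΦ.reduced β (hB.subset hβ) (c γ β) (hγβ ▸ hγ) with h | h
    · exact absurd (by rw [hγβ, h, one_smul]) hne
    · linarith [hpos β hβ]

theorem coord_word (hΦ : IsRootSystem Φ) (hB : IsBase Φ Δ c) {P : V → Prop} {a : V}
    (ha : a ∈ Δ) {l : List V} (hl : ∀ b ∈ l, b ∈ Δ ∧ P b) (hPa : ¬P a) {γ : V} (hγ : γ ∈ Φ) :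
    c (word l γ) a = c γ a := by
  induction l with
  | nil => rfl
  | cons b l ih =>
    have hl' : ∀ x ∈ l, x ∈ Δ ∧ P x := fun x hx => hl x (List.mem_cons_of_mem b hx)
    obtain ⟨hb, hPb⟩ := hl b List.mem_cons_self
    rw [word_cons, LinearIsometryEquiv.coe_mul, Function.comp_apply,
      hB.coord_sref hΦ hb (hΦ.word_apply_mem (fun x hx => hB.subset (hl' x hx).1) hγ) ha,
      if_neg fun h : a = b => hPa (h ▸ hPb), sub_zero, ih hl']

theorem coord_apply_of_mem_parabolic (hΦ : IsRootSystem Φ) (hB : IsBase Φ Δ c) {P : V → Prop}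
    {w : V ≃ₗᵢ[ℝ] V} (hw : w ∈ parabolic Δ P) {a : V} (ha : a ∈ Δ) (hPa : ¬P a) {γ : V}
    (hγ : γ ∈ Φ) : c (w γ) a = c γ a := by
  obtain ⟨l, hl, rfl⟩ := exists_word_of_mem_parabolic hw
  exact hB.coord_word hΦ ha hl hPa hγ

theorem exists_inner_pos_of_ne (hB : IsBase Φ Δ c) {α γ : V} (hα : α ∈ Δ)
    (hγ : γ ∈ Φ) (hcoord : c γ α = 1) (hnorm : ‖γ‖ = ‖α‖) (hne : γ ≠ α) :
    ∃ β ∈ Δ, β ≠ α ∧ 0 < ⟪γ, β⟫ := by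
  by_contra! h
  have hpos := hB.coord_nonneg_of_pos hγ hα (by rw [hcoord]; exact one_pos)
  have hle : ⟪γ, γ⟫ ≤ ⟪γ, α⟫ := by
    rw [hB.inner_eq_sum_coord hγ, ← Finset.add_sum_erase Δ _ hα, hcoord, one_mul]
    refine add_le_of_nonpos_right (Finset.sum_nonpos fun a ha => ?_)
    obtain ⟨hne', ha'⟩ := Finset.mem_erase.mp ha
    exact mul_nonpos_of_nonneg_of_nonpos (hpos a ha') (h a ha' hne')
  have : ‖γ - α‖ ^ 2 ≤ 0 := by
    rw [norm_sub_sq_real, ← hnorm, ← real_inner_self_eq_norm_sq]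
    linarith
  exact hne (sub_eq_zero.mp (norm_eq_zero.mp (pow_eq_zero_iff two_ne_zero |>.mp
    (le_antisymm this (sq_nonneg _)))))

end IsBase

/-- The exchange condition. -/
theorem exists_sublist_word_eq_mul_sref (hΦ : IsRootSystem Φ) (hB : IsBase Φ Δ c) {β : V}
    (hβ : β ∈ Δ) {l : List V} (hl : ∀ b ∈ l, b ∈ Δ) (hneg : ∀ a ∈ Δ, c (word l β) a ≤ 0) :
    ∃ l' : List V, l'.Sublist l ∧ l'.length + 1 = l.length ∧ word l' = word l * sref β := by
  induction l with
  | nil =>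
    have := hneg β hβ
    rw [word_nil, LinearIsometryEquiv.coe_one, id, hB.coord_simple hβ hβ, if_pos rfl] at this
    linarith
  | cons δ t ih =>
    have hδ : δ ∈ Δ := hl δ List.mem_cons_self
    have ht : ∀ b ∈ t, b ∈ Δ := fun b hb => hl b (List.mem_cons_of_mem δ hb)
    have htβ : word t β ∈ Φ := hΦ.word_apply_mem (fun b hb => hB.subset (ht b hb)) (hB.subset hβ)
    rcases hB.sign _ htβ with hpos | htneg
    · have hδeq : word t β = δ := by
        by_contra hne
        obtain ⟨a, ha, hne0⟩ := hB.exists_coord_ne_zero hΦ (hΦ.sref_apply_mem (hB.subset hδ) htβ)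
        exact hne0 (le_antisymm (hneg a ha) (hB.sref_apply_nonneg hΦ hδ htβ hpos hne a ha))
      refine ⟨t, List.sublist_cons_self δ t, rfl, ?_⟩
      rw [word_cons, ← hδeq, sref_conj]
      simp [mul_assoc, sref_mul_self]
    · obtain ⟨t', hsub, hlen, hword⟩ := ih ht htneg
      refine ⟨δ :: t', hsub.cons_cons δ, by simp [hlen], ?_⟩
      rw [word_cons, word_cons, hword, mul_assoc]

/-- A form of Steinberg's theorem on stabilizers in reflection groups. -/
theorem word_mem_parabolic_of_apply_eq_self (hΦ : IsRootSystem Φ) (hB : IsBase Φ Δ c)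
    {P : V → Prop} {x : V} (hx : ∀ a ∈ Δ, P a → ⟪x, a⟫ ≤ 0) (l : List V)
    (hl : ∀ b ∈ l, b ∈ Δ ∧ P b) (hfix : word l x = x) :
    word l ∈ parabolic Δ (fun b => P b ∧ ⟪b, x⟫ = 0) := by
  rcases l.eq_nil_or_concat with rfl | ⟨t, β, rfl⟩
  · exact one_mem _
  simp only [List.concat_eq_append] at hl hfix ⊢
  have hlΔ : ∀ b ∈ t ++ [β], b ∈ Δ := fun b hb => (hl b hb).1
  obtain ⟨hβ, hPβ⟩ := hl β (by simp)
  have hwβ : word (t ++ [β]) β ∈ Φ :=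
    hΦ.word_apply_mem (fun b hb => hB.subset (hlΔ b hb)) (hB.subset hβ)
  rcases hB.sign _ hwβ with hpos | hneg
  · have htβ : word t β = -word (t ++ [β]) β := by
      simp [sref_self]
    obtain ⟨t', hsub, hlen, hword⟩ := exists_sublist_word_eq_mul_sref hΦ hB hβ
      (fun b hb => hlΔ b (List.mem_append_left _ hb)) fun a ha => by
        rw [htβ, hB.coord_neg hΦ hwβ ha]
        exact neg_nonpos.mpr (hpos a ha)
    rw [word_append, word_singleton, ← hword] at hfix ⊢
    exact word_mem_parabolic_of_apply_eq_self hΦ hB hx t'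
      (fun b hb => hl b (List.mem_append_left _ (hsub.subset hb))) hfix
  · have hβx : ⟪β, x⟫ = 0 := by
      have hnonneg : 0 ≤ ⟪x, word (t ++ [β]) β⟫ := by
        rw [hB.inner_eq_sum_coord hwβ]
        refine Finset.sum_nonneg fun a ha => ?_
        by_cases hPa : P a
        · exact mul_nonneg_of_nonpos_of_nonpos (hneg a ha) (hx a ha hPa)
        · rw [hB.coord_word hΦ ha hl hPa (hB.subset hβ), hB.coord_simple hβ ha,
            if_neg fun h : a = β => hPa (h ▸ hPβ), zero_mul]
      have : ⟪x, word (t ++ [β]) β⟫ = ⟪x, β⟫ := by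
        conv_lhs => rw [← hfix]
        exact LinearIsometryEquiv.inner_map_map _ x β
      rw [real_inner_comm]
      linarith [hx β hβ hPβ]
    obtain ⟨l', hsub, hlen, hword⟩ := exists_sublist_word_eq_mul_sref hΦ hB hβ hlΔ hneg
    have hmem := word_mem_parabolic_of_apply_eq_self hΦ hB hx l'
      (fun b hb => hl b (hsub.subset hb))
      (by rw [hword, LinearIsometryEquiv.coe_mul, Function.comp_apply,
        sref_apply_of_inner_eq_zero hβx, hfix])
    rw [hword] at hmem
    simpa [mul_assoc, sref_mul_self] using mul_mem hmem (sref_mem_parabolic hβ ⟨hPβ, hβx⟩)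
termination_by l.length
decreasing_by
  all_goals
    subst_vars
    simp only [List.concat_eq_append, List.length_append, List.length_singleton] at *
    omega

theorem stabilizer_parabolic (hΦ : IsRootSystem Φ) (hB : IsBase Φ Δ c) {P : V → Prop} {x : V}
    (hx : ∀ a ∈ Δ, P a → ⟪x, a⟫ ≤ 0) :
    MulAction.stabilizer (parabolic Δ P) x
      = (parabolic Δ (fun b => P b ∧ ⟪b, x⟫ = 0)).subgroupOf (parabolic Δ P) := by
  ext ⟨w, hw⟩
  rw [MulAction.mem_stabilizer_iff, Subgroup.mem_subgroupOf, Subgroup.smul_def,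
    LinearIsometryEquiv.smul_def]
  constructor
  · intro hfix
    obtain ⟨l, hl, rfl⟩ := exists_word_of_mem_parabolic hw
    exact word_mem_parabolic_of_apply_eq_self hΦ hB hx l hl hfix
  · intro hw'
    have : parabolic Δ (fun b => P b ∧ ⟪b, x⟫ = 0) ≤ MulAction.stabilizer (V ≃ₗᵢ[ℝ] V) x :=
      (Subgroup.closure_le _).mpr fun _ ⟨_, _, ⟨_, hbx⟩, hg⟩ => hg ▸ sref_apply_of_inner_eq_zero hbx
    exact this hw'

theorem orbit_parabolic_ne (hΦ : IsRootSystem Φ) (hB : IsBase Φ Δ c) {α : V} (hα : α ∈ Δ) :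
    MulAction.orbit (parabolic Δ (· ≠ α)) α = {γ | γ ∈ Φ ∧ c γ α = 1 ∧ ‖γ‖ = ‖α‖} := by
  set G := parabolic Δ (· ≠ α)
  set S := {γ | γ ∈ Φ ∧ c γ α = 1 ∧ ‖γ‖ = ‖α‖}
  have hS : ∀ w : G, ∀ γ ∈ S, w • γ ∈ S := fun w γ ⟨hγ, hcoord, hnorm⟩ =>
    ⟨hΦ.apply_mem_of_mem_parabolic hB.subset w.2 hγ,
      (hB.coord_apply_of_mem_parabolic hΦ w.2 hα (not_not.mpr rfl) hγ).trans hcoord,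
      ((w : V ≃ₗᵢ[ℝ] V).norm_map γ).trans hnorm⟩
  have hαS : α ∈ S := ⟨hB.subset hα, by simp [hB.coord_simple hα hα], rfl⟩
  ext γ
  refine ⟨fun ⟨w, hw⟩ => hw ▸ hS w α hαS, fun hγ => ?_⟩
  rw [MulAction.mem_orbit_symm]
  obtain ⟨δ, hδ, hmin⟩ := (Φ.filter (· ∈ MulAction.orbit G γ)).exists_min_image
    (fun δ => ∑ a ∈ Δ, c δ a) ⟨γ, Finset.mem_filter.mpr ⟨hγ.1, MulAction.mem_orbit_self γ⟩⟩
  obtain ⟨-, w, rfl⟩ := Finset.mem_filter.mp hδ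
  obtain ⟨hδΦ, hδcoord, hδnorm⟩ := hS w γ hγ
  by_contra hne
  obtain ⟨β, hβ, hβα, hβpos⟩ :=
    hB.exists_inner_pos_of_ne hα hδΦ hδcoord hδnorm fun h => hne (h ▸ MulAction.mem_orbit _ _)
  have hlt := hmin (sref β (w • γ)) (Finset.mem_filter.mpr
    ⟨hΦ.sref_apply_mem (hB.subset hβ) hδΦ, ⟨⟨sref β, sref_mem_parabolic hβ hβα⟩ * w, rfl⟩⟩)
  rw [hB.sum_coord_sref hΦ hβ hδΦ] at hlt
  have : 0 < 2 * ⟪w • γ, β⟫ / ⟪β, β⟫ := div_pos (by linarith) (hΦ.inner_self_pos (hB.subset hβ))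
  linarith

end

theorem Subgroup.relIndex_eq_card_div {G : Type*} [Group G] {H K : Subgroup G} [Finite H]
    (h : H ≤ K) : H.relIndex K = Nat.card K / Nat.card H := by
  have := Subgroup.relIndex_mul_relIndex ⊥ H K bot_le h
  rw [Subgroup.relIndex_bot_left, Subgroup.relIndex_bot_left] at this
  exact (Nat.div_eq_of_eq_mul_right Nat.card_pos this.symm).symm

theorem stmt18_general (Φ Δ : Finset E) (c : E → E → ℝ)
    (hΦ : IsRootSystem Φ) (hB : IsBase Φ Δ c)
    (α : E) (hα : α ∈ Δ) :
    {γ : E | γ ∈ Φ ∧ c γ α = 1 ∧ ‖γ‖ = ‖α‖}.ncard =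
      Nat.card (Subgroup.closure {g : E ≃ₗᵢ[ℝ] E | ∃ b ∈ Δ, b ≠ α ∧ g = sref b}) /
      Nat.card (Subgroup.closure
        {g : E ≃ₗᵢ[ℝ] E | ∃ b ∈ Δ, ⟪b, α⟫ = 0 ∧ g = sref b}) := by
  change _ = Nat.card (parabolic Δ (· ≠ α)) / Nat.card (parabolic Δ (fun b => ⟪b, α⟫ = 0))
  have hαα := hΦ.inner_self_pos (hB.subset hα)
  have hH : parabolic Δ (fun b => b ≠ α ∧ ⟪b, α⟫ = 0) = parabolic Δ (fun b => ⟪b, α⟫ = 0) :=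
    parabolic_congr fun b _ => ⟨And.right, fun h => ⟨by rintro rfl; linarith, h⟩⟩
  have := hΦ.finite_parabolic hB.subset (fun b => ⟪b, α⟫ = 0)
  rw [← orbit_parabolic_ne hΦ hB hα, ← MulAction.index_stabilizer,
    stabilizer_parabolic hΦ hB fun a ha hne => hB.inner_nonpos hΦ hα ha hne, hH]
  exact Subgroup.relIndex_eq_card_div (parabolic_mono fun b _ h => by rintro rfl; linarith)

/-- The number of roots in `Φ_{α,1}` of the same length as `α` equals
`|W⟨Π \ {α}⟩| / |W⟨Π \ Ñ[α]⟩|`, where `Ñ[α]` consists of `α` and its Dynkin-diagram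
neighbours, so that `Π \ Ñ[α]` is the set of simple roots orthogonal to `α`. -/
theorem stmt18 (Φ Δ : Finset E) (c : E → E → ℝ)
    (hΦ : IsRootSystem Φ) (hB : IsBase Φ Δ c) (hirr : IsIrredSys Φ)
    (α : E) (hα : α ∈ Δ) :
    {γ : E | γ ∈ Φ ∧ c γ α = 1 ∧ ‖γ‖ = ‖α‖}.ncard =
      Nat.card (Subgroup.closure {g : E ≃ₗᵢ[ℝ] E | ∃ b ∈ Δ, b ≠ α ∧ g = sref b}) /
      Nat.card (Subgroup.closure
        {g : E ≃ₗᵢ[ℝ] E | ∃ b ∈ Δ, ⟪b, α⟫ = 0 ∧ g = sref b}) :=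
  stmt18_general Φ Δ c hΦ hB α hα
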